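/- In a pseudogroup, the set of finite elements is closed under multiplication if and only if the set of finite idempotents is closed under multiplication; and every element is a join of finite elements if and only if every idempotent is a join of finite idempotents. -/
import Mathlib


class InvSemigroup (S : Type*) extends Mul S, Inv S where
  mul_assoc : ∀ a b c : S, a * b * c = a * (b * c)
  mul_inv_mul : ∀ a : S, a * a⁻¹ * a = a
  inv_mul_inv : ∀ a : S, a⁻¹ * a * a⁻¹ = a⁻¹
  idem_comm : ∀ e f : S, e * e = e → f * f = f → e * f = f * e

class InvMonoid (S : Type*) extends InvSemigroup S, One S where
  one_mul : ∀ a : S, 1 * a = a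
  mul_one : ∀ a : S, a * 1 = a

/-- The natural partial order on an inverse semigroup: `a ≤ b` iff `a = b * (a⁻¹ * a)`. -/
def nle {S : Type*} [InvSemigroup S] (a b : S) : Prop := a = b * (a⁻¹ * a)

def IsIdem {S : Type*} [Mul S] (e : S) : Prop := e * e = e

/-- Two elements are compatible if `a⁻¹ * b` and `a * b⁻¹` are idempotents. -/
def Compat {S : Type*} [InvSemigroup S] (a b : S) : Prop :=
  IsIdem (a⁻¹ * b) ∧ IsIdem (a * b⁻¹)

def PairwiseCompat {S : Type*} [InvSemigroup S] (X : Set S) : Prop :=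
  ∀ a ∈ X, ∀ b ∈ X, Compat a b

/-- `s` is the join (least upper bound) of `X` with respect to the natural partial order. -/
def IsJoin {S : Type*} [InvSemigroup S] (X : Set S) (s : S) : Prop :=
  (∀ a ∈ X, nle a s) ∧ ∀ u : S, (∀ a ∈ X, nle a u) → nle s u

/-- A pseudogroup: a complete infinitely distributive inverse monoid. Every
compatible subset has a join and multiplication distributes over such joins. -/
class Pseudogroup (S : Type*) extends InvMonoid S where
  join_exists : ∀ X : Set S, PairwiseCompat X → ∃ s : S, IsJoin X s
  mul_join_left : ∀ (X : Set S) (s c : S), IsJoin X s → IsJoin ((fun x => c * x) '' X) (c * s)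
  mul_join_right : ∀ (X : Set S) (s c : S), IsJoin X s → IsJoin ((fun x => x * c) '' X) (s * c)

/-- Filters: nonempty, upward closed, downward directed subsets. -/
def IsPFilter {S : Type*} [InvSemigroup S] (F : Set S) : Prop :=
  F.Nonempty ∧ (∀ a ∈ F, ∀ b : S, nle a b → b ∈ F) ∧
    (∀ a ∈ F, ∀ b ∈ F, ∃ c ∈ F, nle c a ∧ nle c b)

/-- A completely prime filter: whenever a join of a compatible family belongs to the
filter, so does some member of the family. -/
def CompletelyPrime {S : Type*} [InvSemigroup S] (F : Set S) : Prop :=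
  IsPFilter F ∧ ∀ (X : Set S) (s : S), PairwiseCompat X → IsJoin X s → s ∈ F →
    ∃ x ∈ X, x ∈ F

def setInv {S : Type*} [Inv S] (A : Set S) : Set S := {x | ∃ a ∈ A, x = a⁻¹}

def setMul {S : Type*} [Mul S] (A B : Set S) : Set S :=
  {x | ∃ a ∈ A, ∃ b ∈ B, x = a * b}

def upSet {S : Type*} [InvSemigroup S] (A : Set S) : Set S := {x | ∃ a ∈ A, nle a x}

/-- An element `a` of a pseudogroup is finite if every compatible covering of `a`
has a finite subcovering. -/
def FiniteElt {S : Type*} [InvSemigroup S] (a : S) : Prop :=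
  ∀ (X : Set S) (s : S), PairwiseCompat X → IsJoin X s → nle a s →
    ∃ Y : Finset S, ↑Y ⊆ X ∧ ∃ t : S, IsJoin (↑Y : Set S) t ∧ nle a t

section Basics

variable {S : Type*} [InvSemigroup S]

instance (priority := low) : Semigroup S := ⟨InvSemigroup.mul_assoc⟩

lemma mia (a : S) : a * a⁻¹ * a = a := InvSemigroup.mul_inv_mul a
lemma imi (a : S) : a⁻¹ * a * a⁻¹ = a⁻¹ := InvSemigroup.inv_mul_inv a
lemma icomm {e f : S} (he : IsIdem e) (hf : IsIdem f) : e * f = f * e :=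
  InvSemigroup.idem_comm e f he hf

lemma idem_ii (a : S) : IsIdem (a⁻¹ * a) := by
  show a⁻¹ * a * (a⁻¹ * a) = a⁻¹ * a
  rw [← mul_assoc, imi]

lemma idem_ii' (a : S) : IsIdem (a * a⁻¹) := by
  show a * a⁻¹ * (a * a⁻¹) = a * a⁻¹
  rw [← mul_assoc, mia]

lemma idem_mul {e f : S} (he : IsIdem e) (hf : IsIdem f) : IsIdem (e * f) := by
  show e * f * (e * f) = e * f
  calc e * f * (e * f) = e * (f * e) * f := by rw [mul_assoc, mul_assoc, ← mul_assoc f e f]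
    _ = e * (e * f) * f := by rw [icomm he hf]
    _ = (e * e) * (f * f) := by simp only [mul_assoc]
    _ = e * f := by rw [he, hf]

lemma iu {a x : S} (h1 : a * x * a = a) (h2 : x * a * x = x) : x = a⁻¹ := by
  have hxa : IsIdem (x * a) := by
    show x * a * (x * a) = x * a
    rw [← mul_assoc, h2]
  have hax : IsIdem (a * x) := by
    show a * x * (a * x) = a * x
    rw [← mul_assoc, h1]
  have key1 : x = a⁻¹ * a * x := by
    calc x = x * a * x := h2.symm
      _ = x * (a * a⁻¹ * a) * x := by rw [mia]
      _ = (x * a) * (a⁻¹ * a) * x := by simp only [mul_assoc]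
      _ = (a⁻¹ * a) * (x * a) * x := by rw [icomm hxa (idem_ii a)]
      _ = a⁻¹ * (a * x * a) * x := by simp only [mul_assoc]
      _ = a⁻¹ * a * x := by rw [h1]
  have key2 : a⁻¹ = a⁻¹ * a * x := by
    calc a⁻¹ = a⁻¹ * a * a⁻¹ := (imi a).symm
      _ = a⁻¹ * (a * x * a) * a⁻¹ := by rw [h1]
      _ = a⁻¹ * ((a * x) * (a * a⁻¹)) := by simp only [mul_assoc]
      _ = a⁻¹ * ((a * a⁻¹) * (a * x)) := by rw [icomm hax (idem_ii' a)]
      _ = (a⁻¹ * a * a⁻¹) * (a * x) := by simp only [mul_assoc]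
      _ = a⁻¹ * a * x := by rw [imi, mul_assoc]
  rw [key1, ← key2]

lemma iinv (a : S) : (a⁻¹)⁻¹ = a :=
  (iu (imi a) (mia a)).symm

lemma mul_inv_rev' (a b : S) : (a * b)⁻¹ = b⁻¹ * a⁻¹ := by
  have h1 : (a * b) * (b⁻¹ * a⁻¹) * (a * b) = a * b := by
    calc (a * b) * (b⁻¹ * a⁻¹) * (a * b)
        = a * ((b * b⁻¹) * (a⁻¹ * a)) * b := by
          simp only [mul_assoc]
      _ = a * ((a⁻¹ * a) * (b * b⁻¹)) * b := by rw [icomm (idem_ii' b) (idem_ii a)]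
      _ = (a * a⁻¹ * a) * (b * b⁻¹ * b) := by simp only [mul_assoc]
      _ = a * b := by rw [mia, mia]
  have h2 : (b⁻¹ * a⁻¹) * (a * b) * (b⁻¹ * a⁻¹) = b⁻¹ * a⁻¹ := by
    calc (b⁻¹ * a⁻¹) * (a * b) * (b⁻¹ * a⁻¹)
        = b⁻¹ * ((a⁻¹ * a) * (b * b⁻¹)) * a⁻¹ := by simp only [mul_assoc]
      _ = b⁻¹ * ((b * b⁻¹) * (a⁻¹ * a)) * a⁻¹ := by rw [icomm (idem_ii a) (idem_ii' b)]
      _ = (b⁻¹ * b * b⁻¹) * (a⁻¹ * a * a⁻¹) := by simp only [mul_assoc]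
      _ = b⁻¹ * a⁻¹ := by rw [imi, imi]
  exact (iu h1 h2).symm

lemma idem_inv {e : S} (he : IsIdem e) : e⁻¹ = e := by
  have h : e * e * e = e := by rw [he, he]
  exact (iu h h).symm

end Basics
section Order

variable {S : Type*} [InvSemigroup S]

lemma nle_of_idem_right {a b f : S} (hf : IsIdem f) (h : a = b * f) : nle a b := by
  have ha : a⁻¹ = f * b⁻¹ := by rw [h, mul_inv_rev', idem_inv hf]
  have hia : a⁻¹ * a = (b⁻¹ * b) * f := by
    rw [ha, h]
    calc f * b⁻¹ * (b * f) = f * (b⁻¹ * b) * f := by simp only [mul_assoc]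
      _ = (b⁻¹ * b) * f * f := by rw [icomm hf (idem_ii b)]
      _ = (b⁻¹ * b) * f := by rw [mul_assoc, hf]
  show a = b * (a⁻¹ * a)
  rw [hia, ← mul_assoc, ← mul_assoc, mia]
  exact h

lemma nle_of_idem_left {a b e : S} (he : IsIdem e) (h : a = e * b) : nle a b := by
  have ha : a⁻¹ = b⁻¹ * e := by rw [h, mul_inv_rev', idem_inv he]
  show a = b * (a⁻¹ * a)
  rw [ha, h]
  have hre : b * (b⁻¹ * e * (e * b)) = (b * b⁻¹) * e * b := by
    calc b * (b⁻¹ * e * (e * b)) = (b * b⁻¹) * (e * e) * b := by simp only [mul_assoc]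
      _ = (b * b⁻¹) * e * b := by rw [he]
  rw [hre, icomm (idem_ii' b) he, mul_assoc e, mia]

lemma nle_left_form {a b : S} (h : nle a b) : a = (a * a⁻¹) * b := by
  have h' : a = b * (a⁻¹ * a) := h
  have ha : a⁻¹ = (a⁻¹ * a) * b⁻¹ := by
    conv_lhs => rw [h', mul_inv_rev', idem_inv (idem_ii a)]
  calc a = b * (a⁻¹ * a) := h'
    _ = (b * b⁻¹ * b) * (a⁻¹ * a) := by rw [mia]
    _ = b * ((b⁻¹ * b) * (a⁻¹ * a)) := by simp only [mul_assoc]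
    _ = b * ((a⁻¹ * a) * (b⁻¹ * b)) := by rw [icomm (idem_ii b) (idem_ii a)]
    _ = (b * (a⁻¹ * a)) * (b⁻¹ * b) := by simp only [mul_assoc]
    _ = a * (b⁻¹ * b) := by rw [← h']
    _ = a * (a⁻¹ * a) * (b⁻¹ * b) := by rw [← mul_assoc a a⁻¹ a, mia]
    _ = a * ((a⁻¹ * a) * b⁻¹) * b := by simp only [mul_assoc]
    _ = (a * a⁻¹) * b := by rw [← ha]

lemma nle_refl (a : S) : nle a a := by
  show a = a * (a⁻¹ * a)
  rw [← mul_assoc, mia]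

lemma nle_trans {a b c : S} (h1 : nle a b) (h2 : nle b c) : nle a c := by
  have e1 : a = b * (a⁻¹ * a) := h1
  have e2 : b = c * (b⁻¹ * b) := h2
  refine nle_of_idem_right (idem_mul (idem_ii b) (idem_ii a)) ?_
  rw [← mul_assoc, ← e2, ← e1]

lemma nle_mul_left {a b : S} (c : S) (h : nle a b) : nle (c * a) (c * b) := by
  refine nle_of_idem_right (idem_ii a) ?_
  rw [mul_assoc, ← (h : a = b * (a⁻¹ * a))]

lemma nle_mul_right {a b : S} (c : S) (h : nle a b) : nle (a * c) (b * c) := by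
  refine nle_of_idem_left (idem_ii' a) ?_
  rw [← mul_assoc, ← nle_left_form h]

lemma nle_inv {a b : S} (h : nle a b) : nle a⁻¹ b⁻¹ := by
  refine nle_of_idem_left (idem_ii a) ?_
  conv_lhs => rw [(h : a = b * (a⁻¹ * a)), mul_inv_rev', idem_inv (idem_ii a)]

lemma idem_mul_nle {e : S} (he : IsIdem e) (b : S) : nle (e * b) b :=
  nle_of_idem_left he rfl

lemma mul_idem_nle {f : S} (hf : IsIdem f) (b : S) : nle (b * f) b :=
  nle_of_idem_right hf rfl

lemma idem_of_nle_idem {e x : S} (he : IsIdem e) (h : nle x e) : IsIdem x := by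
  have := idem_mul he (idem_ii x)
  rwa [← (h : x = e * (x⁻¹ * x))] at this

lemma idem_absorb {e x : S} (he : IsIdem e) (h : nle x e) : e * x = x := by
  have h' : x = e * (x⁻¹ * x) := h
  calc e * x = e * (e * (x⁻¹ * x)) := by rw [← h']
    _ = (e * e) * (x⁻¹ * x) := by simp only [mul_assoc]
    _ = e * (x⁻¹ * x) := by rw [he]
    _ = x := h'.symm

end Order
section CompatJoin

variable {S : Type*} [InvSemigroup S]

lemma conj_idem (c : S) {g : S} (hg : IsIdem g) : IsIdem (c * g * c⁻¹) := by
  show (c * g * c⁻¹) * (c * g * c⁻¹) = c * g * c⁻¹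
  calc (c * g * c⁻¹) * (c * g * c⁻¹) = c * (g * (c⁻¹ * c)) * (g * c⁻¹) := by
        simp only [mul_assoc]
    _ = c * ((c⁻¹ * c) * g) * (g * c⁻¹) := by rw [icomm hg (idem_ii c)]
    _ = (c * c⁻¹ * c) * ((g * g) * c⁻¹) := by simp only [mul_assoc]
    _ = c * g * c⁻¹ := by rw [mia, hg, mul_assoc]

lemma sandwich_idem {a b : S} (e : S) (he : IsIdem e) (hb : IsIdem (a⁻¹ * b)) :
    IsIdem (a⁻¹ * e * b) := by
  have key : a⁻¹ * e * b = (a⁻¹ * e * a) * (a⁻¹ * b) := by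
    calc a⁻¹ * e * b = (a⁻¹ * a * a⁻¹) * e * b := by rw [imi]
      _ = a⁻¹ * ((a * a⁻¹) * e) * b := by simp only [mul_assoc]
      _ = a⁻¹ * (e * (a * a⁻¹)) * b := by rw [icomm (idem_ii' a) he]
      _ = (a⁻¹ * e * a) * (a⁻¹ * b) := by simp only [mul_assoc]
  rw [key]
  have hconj : IsIdem (a⁻¹ * e * a) := by
    have := conj_idem a⁻¹ he
    rwa [iinv] at this
  exact idem_mul hconj hb

lemma compat_mul_left {a b : S} (c : S) (h : Compat a b) : Compat (c * a) (c * b) := by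
  obtain ⟨h1, h2⟩ := h
  constructor
  · have : (c * a)⁻¹ * (c * b) = a⁻¹ * (c⁻¹ * c) * b := by
      rw [mul_inv_rev']
      simp only [mul_assoc]
    rw [this]
    exact sandwich_idem (c⁻¹ * c) (idem_ii c) h1
  · have : (c * a) * (c * b)⁻¹ = c * (a * b⁻¹) * c⁻¹ := by
      rw [mul_inv_rev']
      simp only [mul_assoc]
    rw [this]
    exact conj_idem c h2

lemma compat_inv {a b : S} (h : Compat a b) : Compat a⁻¹ b⁻¹ := by
  obtain ⟨h1, h2⟩ := h
  exact ⟨by rwa [iinv], by rwa [iinv]⟩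

lemma pc_mul_left (c : S) {X : Set S} (h : PairwiseCompat X) :
    PairwiseCompat ((fun x => c * x) '' X) := by
  rintro _ ⟨a, ha, rfl⟩ _ ⟨b, hb, rfl⟩
  exact compat_mul_left c (h a ha b hb)

lemma pc_inv {X : Set S} (h : PairwiseCompat X) : PairwiseCompat (setInv X) := by
  rintro _ ⟨a, ha, rfl⟩ _ ⟨b, hb, rfl⟩
  exact compat_inv (h a ha b hb)

lemma pc_subset {X Y : Set S} (hYX : Y ⊆ X) (h : PairwiseCompat X) : PairwiseCompat Y :=
  fun a ha b hb => h a (hYX ha) b (hYX hb)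

lemma join_inv {X : Set S} {s : S} (h : IsJoin X s) : IsJoin (setInv X) s⁻¹ := by
  obtain ⟨hub, hlub⟩ := h
  constructor
  · rintro _ ⟨a, ha, rfl⟩
    exact nle_inv (hub a ha)
  · intro u hu
    have : ∀ a ∈ X, nle a u⁻¹ := by
      intro a ha
      have := nle_inv (hu a⁻¹ ⟨a, ha, rfl⟩)
      rwa [iinv] at this
    have := nle_inv (hlub u⁻¹ this)
    rwa [iinv] at this

end CompatJoin
section Fin

variable {S : Type*} [Pseudogroup S]

lemma fin_inv {a : S} (ha : FiniteElt a) : FiniteElt a⁻¹ := by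
  intro X s hc hj hle
  obtain ⟨Y, hYX, t, hjt, hlt⟩ := ha (setInv X) s⁻¹ (pc_inv hc) (join_inv hj)
    (by have := nle_inv hle; rwa [iinv] at this)
  classical
  refine ⟨Y.image (·⁻¹), ?_, t⁻¹, ?_, nle_inv hlt⟩
  · intro y hy
    simp only [Finset.coe_image, Set.mem_image, Finset.mem_coe] at hy
    obtain ⟨z, hz, rfl⟩ := hy
    obtain ⟨w, hw, rfl⟩ := hYX hz
    rwa [iinv]
  · have hset : (↑(Y.image (·⁻¹)) : Set S) = setInv ↑Y := by
      ext x
      simp only [Finset.coe_image, Set.mem_image, Finset.mem_coe, setInv,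
        Set.mem_setOf_eq]
      constructor
      · rintro ⟨z, hz, rfl⟩; exact ⟨z, hz, rfl⟩
      · rintro ⟨z, hz, rfl⟩; exact ⟨z, hz, rfl⟩
    rw [hset]
    exact join_inv hjt

lemma fin_mul_left {x : S} (c : S) (hx : FiniteElt x) (hcx : c * c⁻¹ * x = x) :
    FiniteElt (c⁻¹ * x) := by
  intro X s hc hj hle
  have hxs : nle x (c * s) := by
    have := nle_mul_left c hle
    rwa [← mul_assoc, hcx] at this
  obtain ⟨Y', hY'X, t', hjt', hlt'⟩ := hx ((fun z => c * z) '' X) (c * s)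
    (pc_mul_left c hc) (Pseudogroup.mul_join_left X s c hj) hxs
  classical
  have hpre : ∀ y ∈ Y', ∃ z ∈ X, c * z = y := by
    intro y hy
    obtain ⟨z, hz, hzy⟩ := hY'X hy
    exact ⟨z, hz, hzy⟩
  choose! g hgX hgy using hpre
  have hYX : (↑(Y'.image g) : Set S) ⊆ X := by
    intro z hz
    simp only [Finset.coe_image, Set.mem_image, Finset.mem_coe] at hz
    obtain ⟨y, hy, rfl⟩ := hz
    exact hgX y hy
  obtain ⟨u, hju⟩ := Pseudogroup.join_exists (↑(Y'.image g) : Set S) (pc_subset hYX hc)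
  refine ⟨Y'.image g, hYX, u, hju, ?_⟩
  have hub : ∀ y ∈ (↑Y' : Set S), nle y (c * u) := by
    intro y hy
    have hyY : y ∈ Y' := Finset.mem_coe.mp hy
    have h1 : nle (g y) u :=
      hju.1 (g y) (Finset.mem_coe.mpr (Finset.mem_image_of_mem g hyY))
    have := nle_mul_left c h1
    rwa [hgy y hyY] at this
  have ht'cu : nle t' (c * u) := hjt'.2 (c * u) hub
  have hxcu : nle x (c * u) := nle_trans hlt' ht'cu
  have h2 : nle (c⁻¹ * x) (c⁻¹ * (c * u)) := nle_mul_left c⁻¹ hxcu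
  have h3 : nle (c⁻¹ * (c * u)) u := by
    have := idem_mul_nle (idem_ii c) u
    rwa [mul_assoc] at this
  exact nle_trans h2 h3

lemma fin_mul_right {x : S} (c : S) (hx : FiniteElt x) (hxc : x * (c⁻¹ * c) = x) :
    FiniteElt (x * c⁻¹) := by
  have h1 : c⁻¹ * c * x⁻¹ = x⁻¹ := by
    have h := congrArg (fun z : S => z⁻¹) hxc
    simp only [mul_inv_rev', iinv] at h
    exact h
  have h2 := fin_mul_left c⁻¹ (fin_inv hx) (by rw [iinv]; exact h1)
  rw [iinv] at h2
  have h3 := fin_inv h2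
  rwa [mul_inv_rev', iinv] at h3

lemma fin_dom {a : S} (ha : FiniteElt a) : FiniteElt (a⁻¹ * a) :=
  fin_mul_left a ha (mia a)

lemma fin_ran {a : S} (ha : FiniteElt a) : FiniteElt (a * a⁻¹) := by
  have := fin_mul_left a⁻¹ (fin_inv ha) (by rw [iinv]; exact imi a)
  rwa [iinv] at this

lemma fin_restrict_left {a x : S} (hx : FiniteElt x) (h : a⁻¹ * a * x = x) :
    FiniteElt (a * x) := by
  have := fin_mul_left a⁻¹ hx (by rwa [iinv])
  rwa [iinv] at this

lemma fin_restrict_right {a x : S} (hx : FiniteElt x) (h : x * (a * a⁻¹) = x) :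
    FiniteElt (x * a) := by
  have := fin_mul_right a⁻¹ hx (by rwa [iinv])
  rwa [iinv] at this

end Fin

/-- The finite elements of a pseudogroup are closed under multiplication iff the
finite idempotents are; and every element is a join of finite elements iff every
idempotent is a join of finite idempotents. -/
theorem stmt13 {S : Type*} [Pseudogroup S] :
    ((∀ a b : S, FiniteElt a → FiniteElt b → FiniteElt (a * b)) ↔
      (∀ e f : S, IsIdem e → IsIdem f → FiniteElt e → FiniteElt f →
        FiniteElt (e * f))) ∧
    ((∀ a : S, ∃ X : Set S, (∀ x ∈ X, FiniteElt x) ∧ IsJoin X a) ↔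
      (∀ e : S, IsIdem e →
        ∃ X : Set S, (∀ x ∈ X, FiniteElt x ∧ IsIdem x) ∧ IsJoin X e)) := by
  constructor
  · constructor
    · intro H e f _ _ hfe hff
      exact H e f hfe hff
    · intro H a b ha hb
      have hdd : (a⁻¹ * a) * (a⁻¹ * a) = a⁻¹ * a := idem_ii a
      have hrr : (b * b⁻¹) * (b * b⁻¹) = b * b⁻¹ := idem_ii' b
      have hg_fin : FiniteElt (a⁻¹ * a * (b * b⁻¹)) :=
        H (a⁻¹ * a) (b * b⁻¹) (idem_ii a) (idem_ii' b) (fin_dom ha) (fin_ran hb)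
      have h1 : a⁻¹ * a * (a⁻¹ * a * (b * b⁻¹)) = a⁻¹ * a * (b * b⁻¹) := by
        calc a⁻¹ * a * (a⁻¹ * a * (b * b⁻¹))
            = ((a⁻¹ * a) * (a⁻¹ * a)) * (b * b⁻¹) := by simp only [mul_assoc]
          _ = a⁻¹ * a * (b * b⁻¹) := by rw [hdd]
      have hg2 : FiniteElt (a * (a⁻¹ * a * (b * b⁻¹))) := fin_restrict_left hg_fin h1
      have h2 : (a * (a⁻¹ * a * (b * b⁻¹))) * (b * b⁻¹) = a * (a⁻¹ * a * (b * b⁻¹)) := by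
        calc (a * (a⁻¹ * a * (b * b⁻¹))) * (b * b⁻¹)
            = a * (a⁻¹ * a * ((b * b⁻¹) * (b * b⁻¹))) := by simp only [mul_assoc]
          _ = a * (a⁻¹ * a * (b * b⁻¹)) := by rw [hrr]
      have hg3 : FiniteElt ((a * (a⁻¹ * a * (b * b⁻¹))) * b) := fin_restrict_right hg2 h2
      have heq : (a * (a⁻¹ * a * (b * b⁻¹))) * b = a * b := by
        calc (a * (a⁻¹ * a * (b * b⁻¹))) * b
            = (a * a⁻¹ * a) * (b * b⁻¹ * b) := by simp only [mul_assoc]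
          _ = a * b := by rw [mia, mia]
      rwa [heq] at hg3
  · constructor
    · intro J e he
      obtain ⟨X, hXfin, hXjoin⟩ := J e
      exact ⟨X, fun x hx => ⟨hXfin x hx, idem_of_nle_idem he (hXjoin.1 x hx)⟩, hXjoin⟩
    · intro J a
      obtain ⟨X, hX, hjoin⟩ := J (a⁻¹ * a) (idem_ii a)
      refine ⟨(fun x => a * x) '' X, ?_, ?_⟩
      · rintro _ ⟨x, hx, rfl⟩
        exact fin_restrict_left (hX x hx).1 (idem_absorb (idem_ii a) (hjoin.1 x hx))
      · have := Pseudogroup.mul_join_left X (a⁻¹ * a) a hjoin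
        rwa [← mul_assoc, mia] at this
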